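/- If x(t) solves ẋ(t) = −Z(x(t))⁻¹∇f(x(t)) with Z(x)⁻¹ diagonal with entries in (d₁, d₂), f bounded below by −R, and f(x(0)) ≤ R, then for all t > 0, ∫₀ᵗ ‖∇f(x(s))‖² ds ≤ 2R/d₁. -/

import Mathlib

/-!
Along the flow, `d/dt f(x(t)) = ⟪∇f, ẋ⟫ = -∑ᵢ zᵢ (∂ᵢf)² ≤ -d₁ ‖∇f‖²`, so `f ∘ x` decreases at
rate at least `d₁ ‖∇f(x)‖²`. Integrating, `d₁ ∫₀ᵗ ‖∇f(x)‖² ≤ f(x(0)) - f(x(t)) < R + R`.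
-/

open MeasureTheory intervalIntegral Set

open scoped InnerProductSpace

theorem HasGradientAt.comp_hasDerivAt {F : Type*} [NormedAddCommGroup F] [InnerProductSpace ℝ F]
    [CompleteSpace F] {f : F → ℝ} {f' : F} {γ : ℝ → F} {γ' : F} {s : ℝ}
    (hf : HasGradientAt f f' (γ s)) (hγ : HasDerivAt γ γ' s) :
    HasDerivAt (f ∘ γ) ⟪f', γ'⟫_ℝ s := by
  simpa using hf.hasFDerivAt.comp_hasDerivAt s hγ

theorem EuclideanSpace.inner_le_neg_mul_norm_sq_of_apply_eq_neg_mul {ι : Type*} [Fintype ι]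
    {g v : EuclideanSpace ℝ ι} {z : ι → ℝ} {c : ℝ} (hz : ∀ i, c ≤ z i)
    (hv : ∀ i, v i = -z i * g i) :
    ⟪g, v⟫_ℝ ≤ -(c * ‖g‖ ^ 2) := by
  simp only [EuclideanSpace.norm_sq_eq, PiLp.inner_apply, RCLike.inner_apply, conj_trivial,
    Real.norm_eq_abs, sq_abs, hv, Finset.mul_sum, ← Finset.sum_neg_distrib]
  refine Finset.sum_le_sum fun i _ => ?_
  nlinarith [hz i, sq_nonneg (g i)]

theorem integral_le_sub_div_of_hasDerivAt_le_neg_mul {F F' G : ℝ → ℝ} {a b c : ℝ}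
    (hc : 0 < c) (hab : a ≤ b) (hF : ∀ s, HasDerivAt F (F' s) s) (hG : ∀ s, 0 ≤ G s)
    (hF' : ∀ s, F' s ≤ -(c * G s)) :
    ∫ s in a..b, G s ≤ (F a - F b) / c := by
  by_cases hint : IntervalIntegrable G volume a b
  · have hGF' : ∀ s, G s ≤ -F' s / c := fun s => by
      rw [le_div_iff₀ hc]; linarith [hF' s]
    have := integral_le_sub_of_hasDeriv_right_of_le hab
      (fun s _ => ((hF s).neg.div_const c).continuousAt.continuousWithinAt)
      (fun s _ => ((hF s).neg.div_const c).hasDerivWithinAt)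
      (by rw [integrableOn_Icc_iff_integrableOn_Ioc]; exact hint.1) (fun s _ => hGF' s)
    calc _ ≤ -F b / c - -F a / c := this
      _ = (F a - F b) / c := by ring
  · -- The integral is the junk value `0`; the bound still holds because `F` is antitone.
    have hanti : Antitone F :=
      antitone_of_hasDerivAt_nonpos hF fun s =>
        (hF' s).trans (neg_nonpos.2 (mul_nonneg hc.le (hG s)))
    rw [intervalIntegral.integral_undef hint]
    exact div_nonneg (sub_nonneg.2 (hanti hab)) hc.le

theorem scaled_gradient_flow_integral_bound_general
    {n : ℕ} (f : EuclideanSpace ℝ (Fin n) → ℝ)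
    (z : EuclideanSpace ℝ (Fin n) → Fin n → ℝ) (d₁ d₂ R : ℝ)
    (hd₁ : 0 < d₁)
    (hz : ∀ p i, d₁ < z p i ∧ z p i < d₂)
    (hf : Differentiable ℝ f)
    (hbelow : ∀ p, -R < f p)
    (x : ℝ → EuclideanSpace ℝ (Fin n))
    (hx : Differentiable ℝ x)
    (hinit : f (x 0) ≤ R)
    (hode : ∀ t, ∀ i, (deriv x t) i = -(z (x t) i) * (gradient f (x t)) i) :
    ∀ t > 0, ∫ s in (0:ℝ)..t, ‖gradient f (x s)‖ ^ 2 ≤ 2 * R / d₁ := by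
  intro t ht
  have hdecay : ∀ s, HasDerivAt (f ∘ x) ⟪gradient f (x s), deriv x s⟫_ℝ s := fun s =>
    (hf (x s)).hasGradientAt.comp_hasDerivAt (hx s).hasDerivAt
  have hrate : ∀ s, ⟪gradient f (x s), deriv x s⟫_ℝ ≤ -(d₁ * ‖gradient f (x s)‖ ^ 2) := fun s =>
    EuclideanSpace.inner_le_neg_mul_norm_sq_of_apply_eq_neg_mul (fun i => (hz (x s) i).1.le)
      (hode s)
  calc ∫ s in (0:ℝ)..t, ‖gradient f (x s)‖ ^ 2 ≤ (f (x 0) - f (x t)) / d₁ :=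
        integral_le_sub_div_of_hasDerivAt_le_neg_mul hd₁ ht.le hdecay (fun _ => by positivity)
          hrate
    _ ≤ 2 * R / d₁ := by gcongr; linarith [hbelow (x t)]

/-- If `x(t)` solves the scaled gradient flow with diagonal `Z⁻¹` entries in `(d₁, d₂)`,
`f` bounded below by `−R` and `f(x(0)) ≤ R`, then for all `t > 0`,
`∫₀ᵗ ‖∇f(x(s))‖² ds ≤ 2R/d₁`. -/
theorem scaled_gradient_flow_integral_bound
    {n : ℕ} (f : EuclideanSpace ℝ (Fin n) → ℝ)
    (z : EuclideanSpace ℝ (Fin n) → Fin n → ℝ) (d₁ d₂ R : ℝ)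
    (hd₁ : 0 < d₁) (hR : 0 < R)
    (hz : ∀ p i, d₁ < z p i ∧ z p i < d₂)
    (hf : Differentiable ℝ f)
    (hbelow : ∀ p, -R < f p)
    (x : ℝ → EuclideanSpace ℝ (Fin n))
    (hx : Differentiable ℝ x)
    (hinit : f (x 0) ≤ R)
    (hode : ∀ t, ∀ i, (deriv x t) i = -(z (x t) i) * (gradient f (x t)) i) :
    ∀ t > 0, ∫ s in (0:ℝ)..t, ‖gradient f (x s)‖ ^ 2 ≤ 2 * R / d₁ :=
  scaled_gradient_flow_integral_bound_general f z d₁ d₂ R hd₁ hz hf hbelow x hx hinit hode
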